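/- For a chi-squared random variable Z_d with d degrees of freedom and any threshold a > d, the Chernoff bound holds: P(Z_d > a) ≤ exp(−(a − d)/2 − (d/2)·ln(d/a)) = exp(−(a−d)/2) · (a/d)^{d/2}. -/

import Mathlib

open MeasureTheory ProbabilityTheory Real

lemma gauss_withDensity_aux :
    gaussianReal 0 1 =
      MeasureTheory.volume.withDensity
        (fun x => ((gaussianPDFReal 0 1 x).toNNReal : ENNReal)) := by
  rw [gaussianReal_of_var_ne_zero 0 one_ne_zero]
  rfl

lemma gauss_pdf_mul_aux (t x : ℝ) :
    gaussianPDFReal 0 1 x * Real.exp (t * x ^ 2)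
      = (Real.sqrt (2 * π))⁻¹ * Real.exp (-(1/2 - t) * x ^ 2) := by
  simp only [gaussianPDFReal, NNReal.coe_one, mul_one, sub_zero]
  rw [mul_assoc, ← Real.exp_add]
  congr 1
  ring

lemma integrable_exp_mul_sq_gaussian_aux {t : ℝ} (ht : t < 1/2) :
    Integrable (fun x => Real.exp (t * x ^ 2)) (gaussianReal 0 1) := by
  rw [gauss_withDensity_aux,
    integrable_withDensity_iff_integrable_smul
      (measurable_gaussianPDFReal 0 1).real_toNNReal]
  have h : ∀ x : ℝ, ((gaussianPDFReal 0 1 x).toNNReal : NNReal) • Real.exp (t * x ^ 2)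
      = (Real.sqrt (2 * π))⁻¹ * Real.exp (-(1/2 - t) * x ^ 2) := fun x => by
    rw [NNReal.smul_def, smul_eq_mul, Real.coe_toNNReal _ (gaussianPDFReal_nonneg 0 1 x),
      gauss_pdf_mul_aux]
  simp_rw [h]
  exact (integrable_exp_neg_mul_sq (by linarith)).const_mul _

lemma integral_exp_mul_sq_gaussian_aux {t : ℝ} (ht : t < 1/2) :
    ∫ x, Real.exp (t * x ^ 2) ∂(gaussianReal 0 1) = (Real.sqrt (1 - 2*t))⁻¹ := by
  rw [gauss_withDensity_aux,
    integral_withDensity_eq_integral_smul (measurable_gaussianPDFReal 0 1).real_toNNReal]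
  have h : ∀ x : ℝ, ((gaussianPDFReal 0 1 x).toNNReal : NNReal) • Real.exp (t * x ^ 2)
      = (Real.sqrt (2 * π))⁻¹ * Real.exp (-(1/2 - t) * x ^ 2) := fun x => by
    rw [NNReal.smul_def, smul_eq_mul, Real.coe_toNNReal _ (gaussianPDFReal_nonneg 0 1 x),
      gauss_pdf_mul_aux]
  simp_rw [h, integral_const_mul, integral_gaussian]
  rw [← Real.sqrt_inv, ← Real.sqrt_mul (by positivity), ← Real.sqrt_inv]
  congr 1
  have hπ : (0:ℝ) < π := Real.pi_pos
  have h4 : (1:ℝ) - t*2 ≠ 0 := by linarith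
  field_simp

theorem chi_squared_chernoff_bound
    {Ω : Type*} [MeasureSpace Ω] [IsProbabilityMeasure (ℙ : Measure Ω)]
    {d : ℕ}
    (G : Fin d → Ω → ℝ)
    (hmeas : ∀ i, Measurable (G i))
    (hG : ∀ i, Measure.map (G i) ℙ = gaussianReal 0 1)
    (hindep : iIndepFun G ℙ)
    (a : ℝ) (ha : (d : ℝ) < a) :
    (ℙ {ω | a < ∑ i, (G i ω) ^ 2}).toReal ≤
      Real.exp (-(a - d) / 2 - (d / 2) * Real.log ((d : ℝ) / a)) := by
  have ha0 : (0:ℝ) < a := lt_of_le_of_lt (Nat.cast_nonneg d) ha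
  rcases Nat.eq_zero_or_pos d with hd | hd
  · subst hd
    have hempty : {ω : Ω | a < ∑ i : Fin 0, (G i ω) ^ 2} = ∅ := by
      ext ω; simp [not_lt.2 ha0.le]
    rw [hempty]
    simp [Real.exp_nonneg]
  · have hd0 : (0:ℝ) < d := Nat.cast_pos.2 hd
    set t : ℝ := (a - d) / (2 * a) with ht_def
    have ht0 : 0 < t := div_pos (by linarith) (by linarith)
    have ht2 : t < 1/2 := by
      rw [ht_def, div_lt_div_iff₀ (by linarith) (by norm_num)]
      linarith
    have h1 : 1 - 2*t = (d:ℝ) / a := by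
      rw [ht_def]; field_simp; ring
    have hta : t * a = (a - d) / 2 := by
      rw [ht_def]; field_simp
    have hgmeas : Measurable (fun x : ℝ => Real.exp (t * x ^ 2)) :=
      ((measurable_id.pow_const 2).const_mul t).exp
    -- integrability of each exp(t * G i ^ 2)
    have hint_i : ∀ i, Integrable (fun ω => Real.exp (t * (G i ω) ^ 2)) ℙ := by
      intro i
      have h := integrable_exp_mul_sq_gaussian_aux ht2
      rw [← hG i] at h
      exact (integrable_map_measure hgmeas.aestronglyMeasurable
        (hmeas i).aemeasurable).mp h
    have hmeas2 : ∀ i, Measurable (fun ω => (G i ω) ^ 2) :=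
      fun i => (hmeas i).pow_const 2
    have hindep2 : iIndepFun
        (fun i ω => (G i ω) ^ 2) ℙ :=
      hindep.comp (fun _ x => x ^ 2) (fun _ => measurable_id.pow_const 2)
    have hsum_eq : (fun ω => ∑ i, (G i ω) ^ 2) = ∑ i, (fun ω => (G i ω) ^ 2) := by
      ext ω; simp
    have hint_sum : Integrable (fun ω => Real.exp (t * ∑ i, (G i ω) ^ 2)) ℙ := by
      have := hindep2.integrable_exp_mul_sum hmeas2
        (s := Finset.univ) (fun i _ => hint_i i)
      rw [← hsum_eq] at this
      exact this
    -- mgf of each square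
    have hmgf_i : ∀ i, mgf (fun ω => (G i ω) ^ 2) ℙ t = (Real.sqrt (1 - 2*t))⁻¹ := by
      intro i
      have h := integral_exp_mul_sq_gaussian_aux ht2
      rw [← hG i, integral_map (hmeas i).aemeasurable hgmeas.aestronglyMeasurable] at h
      exact h
    have hmgf : mgf (fun ω => ∑ i, (G i ω) ^ 2) ℙ t = ((Real.sqrt (1 - 2*t))⁻¹) ^ d := by
      rw [hsum_eq, hindep2.mgf_sum hmeas2]
      simp [hmgf_i]
    have hchernoff := measure_ge_le_exp_mul_mgf
      (X := fun ω => ∑ i, (G i ω) ^ 2) (μ := ℙ) a ht0.le hint_sum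
    have hmono : (ℙ {ω | a < ∑ i, (G i ω) ^ 2}).toReal ≤
        (ℙ {ω | a ≤ ∑ i, (G i ω) ^ 2}).toReal := by
      have hsub : {ω | a < ∑ i, (G i ω) ^ 2} ⊆ {ω | a ≤ ∑ i, (G i ω) ^ 2} :=
        fun ω hω => by
          simp only [Set.mem_setOf_eq] at hω ⊢; exact hω.le
      exact ENNReal.toReal_mono (measure_ne_top _ _) (measure_mono hsub)
    refine hmono.trans (hchernoff.trans_eq ?_)
    rw [hmgf, h1]
    have hda : (0:ℝ) < (d:ℝ) / a := div_pos hd0 ha0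
    have hsq : (Real.sqrt ((d:ℝ)/a))⁻¹ = Real.exp (-(Real.log ((d:ℝ)/a)) / 2) := by
      rw [← Real.exp_log (Real.sqrt_pos.2 hda), Real.log_sqrt hda.le, ← Real.exp_neg]
      ring_nf
    rw [hsq, ← Real.exp_nat_mul, ← Real.exp_add]
    congr 1
    rw [neg_mul, hta]
    ring
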